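/- Deterministic descent with disagreement penalty: let E be a real inner product space, let F_1,…,F_N : E → ℝ each be differentiable with L-Lipschitz gradient (L > 0), and set F = (1/N) ∑_i F_i. Let θ : Fin N → E, θ̄ = (1/N) ∑_i θ i, g = (1/N) ∑_i ∇F_i(θ i), and 0 < γ ≤ 1/L. Then F(θ̄ − γ • g) ≤ F(θ̄) − (γ/2) ‖∇F(θ̄)‖² + (γ L²/2) · (1/N) ∑_i ‖θ i − θ̄‖². -/

import Mathlib

/-!
The average objective `F̄ = (1/N) ∑ F i` has the `L`-Lipschitz gradient `(1/N) ∑ F' i`, so the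
descent lemma applies to it. Along any direction `g`, a step of size `γ ≤ 1/L` then gives, after
polarization, `F̄ (θ̄ - γ g) ≤ F̄ θ̄ - γ/2 ‖∇F̄ θ̄‖² + γ/2 ‖∇F̄ θ̄ - g‖²`. For the averaged local
gradient `g`, Jensen's inequality and the Lipschitz bounds give
`‖∇F̄ θ̄ - g‖² ≤ (1/N) ∑ ‖F' i θ̄ - F' i (θ i)‖² ≤ L² (1/N) ∑ ‖θ i - θ̄‖²`.
-/

open Finset

theorem image_le_add_fderiv_add_sq_of_lipschitz_fderiv {E : Type*} [NormedAddCommGroup E]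
    [NormedSpace ℝ E] {f : E → ℝ} {f' : E → StrongDual ℝ E} {L : ℝ}
    (hf : ∀ x, HasFDerivAt f (f' x) x) (hlip : ∀ a b, ‖f' a - f' b‖ ≤ L * ‖a - b‖) (x y : E) :
    f y ≤ f x + f' x (y - x) + L / 2 * ‖y - x‖ ^ 2 := by
  obtain ⟨v, rfl⟩ : ∃ v, y = x + v := ⟨y - x, by abel⟩
  rw [add_sub_cancel_left]
  -- `ψ` is antitone on `[0, ∞)` by the Lipschitz bound on its derivative; `ψ 1 ≤ ψ 0` is the claim.
  let ψ : ℝ → ℝ := fun t => f (x + t • v) - t * f' x v - L / 2 * t ^ 2 * ‖v‖ ^ 2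
  have hψ : ∀ t, HasDerivAt ψ ((f' (x + t • v) - f' x) v - L * t * ‖v‖ ^ 2) t := by
    intro t
    have hline : HasDerivAt (fun t : ℝ => x + t • v) v t := by
      simpa using ((hasDerivAt_id t).smul_const v).const_add x
    refine ((((hf _).comp_hasDerivAt t hline).sub ((hasDerivAt_id t).mul_const (f' x v))).sub
      (((hasDerivAt_pow 2 t).const_mul (L / 2)).mul_const (‖v‖ ^ 2))).congr_deriv ?_
    simp only [FunLike.coe_sub, Pi.sub_apply, one_mul]
    ring
  have hψ_nonpos : ∀ t ∈ interior (Set.Ici (0 : ℝ)),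
      (f' (x + t • v) - f' x) v - L * t * ‖v‖ ^ 2 ≤ 0 := by
    intro t ht
    rw [interior_Ici] at ht
    have hbound : |(f' (x + t • v) - f' x) v| ≤ L * t * ‖v‖ ^ 2 :=
      calc |(f' (x + t • v) - f' x) v| ≤ ‖f' (x + t • v) - f' x‖ * ‖v‖ :=
            (f' _ - f' x).le_opNorm v
        _ ≤ L * ‖t • v‖ * ‖v‖ := by
            simpa only [add_sub_cancel_left] using
              mul_le_mul_of_nonneg_right (hlip (x + t • v) x) (norm_nonneg v)
        _ = L * t * ‖v‖ ^ 2 := by rw [norm_smul, Real.norm_of_nonneg ht.le]; ring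
    linarith [le_abs_self ((f' (x + t • v) - f' x) v)]
  have hanti : AntitoneOn ψ (Set.Ici 0) :=
    antitoneOn_of_hasDerivWithinAt_nonpos (convex_Ici 0)
      (fun t _ => (hψ t).continuousAt.continuousWithinAt)
      (fun t _ => (hψ t).hasDerivWithinAt) hψ_nonpos
  have hψ0 : ψ 0 = f x := by simp [ψ]
  have hψ1 : ψ 1 = f (x + v) - f' x v - L / 2 * ‖v‖ ^ 2 := by simp [ψ]
  linarith [hanti Set.self_mem_Ici (Set.mem_Ici.2 zero_le_one) zero_le_one]

section InnerProductSpace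

variable {E : Type*} [NormedAddCommGroup E] [InnerProductSpace ℝ E] [CompleteSpace E]

theorem HasGradientAt.sum {ι : Type*} {s : Finset ι} {f : ι → E → ℝ} {f' : ι → E} {x : E}
    (h : ∀ i ∈ s, HasGradientAt (f i) (f' i) x) :
    HasGradientAt (fun y => ∑ i ∈ s, f i y) (∑ i ∈ s, f' i) x := by
  rw [hasGradientAt_iff_hasFDerivAt, map_sum]
  exact HasFDerivAt.fun_sum h

theorem HasGradientAt.const_mul {f : E → ℝ} {f' x : E} (h : HasGradientAt f f' x) (c : ℝ) :
    HasGradientAt (fun y => c * f y) (c • f') x := by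
  rw [hasGradientAt_iff_hasFDerivAt, map_smul]
  exact h.hasFDerivAt.const_mul c

theorem image_le_add_inner_add_sq_of_lipschitz_gradient {f : E → ℝ} {f' : E → E} {L : ℝ}
    (hf : ∀ x, HasGradientAt f (f' x) x) (hlip : ∀ a b, ‖f' a - f' b‖ ≤ L * ‖a - b‖) (x y : E) :
    f y ≤ f x + inner ℝ (f' x) (y - x) + L / 2 * ‖y - x‖ ^ 2 :=
  image_le_add_fderiv_add_sq_of_lipschitz_fderiv
    (f' := fun x => InnerProductSpace.toDual ℝ E (f' x))
    hf (fun a b => by simpa only [← map_sub, LinearIsometryEquiv.norm_map] using hlip a b) x y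

theorem image_sub_smul_le_of_lipschitz_gradient {f : E → ℝ} {f' : E → E} {L γ : ℝ}
    (hf : ∀ x, HasGradientAt f (f' x) x) (hlip : ∀ a b, ‖f' a - f' b‖ ≤ L * ‖a - b‖)
    (hγ : 0 ≤ γ) (hγL : γ * L ≤ 1) (x g : E) :
    f (x - γ • g) ≤ f x - γ / 2 * ‖f' x‖ ^ 2 + γ / 2 * ‖f' x - g‖ ^ 2 := by
  -- polarization turns `-γ ⟪f' x, g⟫` into the two squares, and `γ L ≤ 1` absorbs the `‖g‖²` term
  have hdesc := image_le_add_inner_add_sq_of_lipschitz_gradient hf hlip x (x - γ • g)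
  rw [sub_sub_cancel_left, inner_neg_right, real_inner_smul_right, norm_neg, norm_smul,
    Real.norm_of_nonneg hγ] at hdesc
  have hpolar := norm_sub_sq_real (f' x) g
  nlinarith [mul_nonneg (mul_nonneg hγ (sub_nonneg.2 hγL)) (sq_nonneg ‖g‖)]

end InnerProductSpace

section Average

variable {ι E : Type*} [SeminormedAddCommGroup E] (s : Finset ι) (v : ι → E)

theorem norm_sum_sq_le_card_mul_sum_norm_sq :
    ‖∑ i ∈ s, v i‖ ^ 2 ≤ #s * ∑ i ∈ s, ‖v i‖ ^ 2 :=
  (pow_le_pow_left₀ (norm_nonneg _) (norm_sum_le s v) 2).trans sq_sum_le_card_mul_sum_sq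

variable [NormedSpace ℝ E]

theorem norm_average_sq_le :
    ‖((1 : ℝ) / #s) • ∑ i ∈ s, v i‖ ^ 2 ≤ (1 / #s) * ∑ i ∈ s, ‖v i‖ ^ 2 := by
  rw [norm_smul, mul_pow, Real.norm_of_nonneg (by positivity)]
  calc (1 / (#s : ℝ)) ^ 2 * ‖∑ i ∈ s, v i‖ ^ 2
      ≤ (1 / (#s : ℝ)) ^ 2 * (#s * ∑ i ∈ s, ‖v i‖ ^ 2) := by
        gcongr; exact norm_sum_sq_le_card_mul_sum_norm_sq s v
    _ = (1 / #s) * ∑ i ∈ s, ‖v i‖ ^ 2 := by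
        rcases eq_or_ne (#s : ℝ) 0 with h | h
        · simp [h]
        · field_simp

theorem norm_average_le_of_norm_le {r : ℝ} (hr : 0 ≤ r) (hv : ∀ i ∈ s, ‖v i‖ ≤ r) :
    ‖((1 : ℝ) / #s) • ∑ i ∈ s, v i‖ ≤ r := by
  rw [norm_smul, Real.norm_of_nonneg (by positivity)]
  calc 1 / (#s : ℝ) * ‖∑ i ∈ s, v i‖ ≤ 1 / #s * (#s * r) := by
        gcongr
        simpa using norm_sum_le_of_le s hv
    _ ≤ r := by
        rw [← mul_assoc, one_div_mul_eq_div]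
        exact mul_le_of_le_one_left hr (div_self_le_one _)

end Average

theorem deterministic_descent_with_disagreement_general
    (E : Type*) [NormedAddCommGroup E] [InnerProductSpace ℝ E] [CompleteSpace E]
    (N : ℕ) (L : ℝ) (hL : 0 < L)
    (F : Fin N → E → ℝ) (F' : Fin N → E → E)
    (hgrad : ∀ i x, HasGradientAt (F i) (F' i x) x)
    (hlip : ∀ i (a b : E), ‖F' i a - F' i b‖ ≤ L * ‖a - b‖)
    (θ : Fin N → E) (θbar g : E)
    (hg : g = ((1 : ℝ) / N) • ∑ i : Fin N, F' i (θ i))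
    (γ : ℝ) (hγ0 : 0 < γ) (hγL : γ ≤ 1 / L) :
    ((1 : ℝ) / N) * ∑ i : Fin N, F i (θbar - γ • g)
      ≤ ((1 : ℝ) / N) * ∑ i : Fin N, F i θbar
        - (γ / 2) * ‖((1 : ℝ) / N) • ∑ i : Fin N, F' i θbar‖ ^ 2
        + (γ * L ^ 2 / 2) * (((1 : ℝ) / N) * ∑ i : Fin N, ‖θ i - θbar‖ ^ 2) := by
  have hgrad_avg : ∀ x, HasGradientAt (fun y => (1 / N : ℝ) * ∑ i, F i y)
      ((1 / N : ℝ) • ∑ i, F' i x) x :=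
    fun x => (HasGradientAt.sum fun i _ => hgrad i x).const_mul _
  have hlip_avg :
      ∀ a b, ‖(1 / N : ℝ) • ∑ i, F' i a - (1 / N : ℝ) • ∑ i, F' i b‖ ≤ L * ‖a - b‖ := by
    intro a b
    rw [← smul_sub, ← sum_sub_distrib]
    simpa using norm_average_le_of_norm_le univ _ (by positivity) fun i _ => hlip i a b
  have hdisagreement : ‖(1 / N : ℝ) • ∑ i, F' i θbar - g‖ ^ 2
      ≤ L ^ 2 * ((1 / N) * ∑ i, ‖θ i - θbar‖ ^ 2) := by
    rw [hg, ← smul_sub, ← sum_sub_distrib]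
    calc _ ≤ (1 / N : ℝ) * ∑ i, ‖F' i θbar - F' i (θ i)‖ ^ 2 := by
          simpa using norm_average_sq_le univ fun i => F' i θbar - F' i (θ i)
      _ ≤ (1 / N : ℝ) * ∑ i, L ^ 2 * ‖θ i - θbar‖ ^ 2 := by
          gcongr with i
          rw [← mul_pow, norm_sub_rev (θ i)]
          exact pow_le_pow_left₀ (norm_nonneg _) (hlip i _ _) 2
      _ = L ^ 2 * ((1 / N) * ∑ i, ‖θ i - θbar‖ ^ 2) := by
          rw [← mul_sum]
          ring
  have hstep := image_sub_smul_le_of_lipschitz_gradient hgrad_avg hlip_avg hγ0.le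
    ((le_div_iff₀ hL).1 hγL) θbar g
  linarith [mul_le_mul_of_nonneg_left hdisagreement (by positivity : 0 ≤ γ / 2)]

/-- **Deterministic descent with disagreement penalty.**
Each client objective `F i` is differentiable with `L`-Lipschitz gradient
`F' i`; `F̄ = (1/N) ∑ i, F i` is the average objective (with gradient
`(1/N) • ∑ i, F' i`), `θ̄` is the average parameter, and
`g = (1/N) • ∑ i, F' i (θ i)` the averaged local gradient.  Then one step of
size `0 < γ ≤ 1/L` from `θ̄` along `g` decreases `F̄` up to a penalty
proportional to the disagreement `(1/N) ∑ i, ‖θ i − θ̄‖²`. -/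
theorem deterministic_descent_with_disagreement
    (E : Type*) [NormedAddCommGroup E] [InnerProductSpace ℝ E] [CompleteSpace E]
    (N : ℕ) (L : ℝ) (hL : 0 < L)
    (F : Fin N → E → ℝ) (F' : Fin N → E → E)
    (hgrad : ∀ i x, HasGradientAt (F i) (F' i x) x)
    (hlip : ∀ i (a b : E), ‖F' i a - F' i b‖ ≤ L * ‖a - b‖)
    (θ : Fin N → E) (θbar g : E)
    (hθbar : θbar = ((1 : ℝ) / N) • ∑ i : Fin N, θ i)
    (hg : g = ((1 : ℝ) / N) • ∑ i : Fin N, F' i (θ i))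
    (γ : ℝ) (hγ0 : 0 < γ) (hγL : γ ≤ 1 / L) :
    ((1 : ℝ) / N) * ∑ i : Fin N, F i (θbar - γ • g)
      ≤ ((1 : ℝ) / N) * ∑ i : Fin N, F i θbar
        - (γ / 2) * ‖((1 : ℝ) / N) • ∑ i : Fin N, F' i θbar‖ ^ 2
        + (γ * L ^ 2 / 2) * (((1 : ℝ) / N) * ∑ i : Fin N, ‖θ i - θbar‖ ^ 2) :=
  deterministic_descent_with_disagreement_general E N L hL F F' hgrad hlip θ θbar g hg γ hγ0 hγL
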